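/- arXiv:2503.01614 — 4 statements merged into one kernel-verified Lean document; each statement's English description precedes it below -/
import Mathlib

section
/- Let P be a poset with an ℝ-action Λ, and let I, J be intervals of P with I ⊆ Ex_ε(J) and J ⊆ Ex_ε(I), where Ex_ε(A) := Λ_{-ε}(A)^↑ ∩ Λ_ε(A)^↓. Then every connected component C of I ∩ Λ_{-ε}(J) satisfies I ∩ C^↓ ⊆ C and Λ_{-ε}(J) ∩ C^↑ ⊆ C; i.e., every connected component of I ∩ Λ_{-ε}(J) induces a nonzero morphism of interval modules k_I → k_J(ε). -/
open CategoryTheory NNReal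

/-- The upset `C^↑` generated by a subset of a poset. -/
def genUpset {P : Type} [PartialOrder P] (C : Set P) : Set P := {p | ∃ a ∈ C, a ≤ p}

/-- The downset `C^↓` generated by a subset of a poset. -/
def genDownset {P : Type} [PartialOrder P] (C : Set P) : Set P := {p | ∃ a ∈ C, p ≤ a}

/-- Convexity of a subset of a poset. -/
def IsOrdConvex {P : Type} [PartialOrder P] (C : Set P) : Prop :=
  ∀ ⦃p q r : P⦄, p ∈ C → q ∈ C → p ≤ r → r ≤ q → r ∈ C

/-- Connectivity of a subset of a poset: any two elements are joined by a
fence of pairwise comparable elements inside the subset. -/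
def IsFenceConnected {P : Type} [PartialOrder P] (C : Set P) : Prop :=
  ∀ ⦃p⦄, p ∈ C → ∀ ⦃q⦄, q ∈ C →
    Relation.ReflTransGen (fun a b => a ∈ C ∧ b ∈ C ∧ (a ≤ b ∨ b ≤ a)) p q

/-- An interval of a poset: a convex and connected subset. -/
def IsItv {P : Type} [PartialOrder P] (C : Set P) : Prop :=
  IsOrdConvex C ∧ IsFenceConnected C

/-- `C` is a connected component of the subset `S` of a poset. -/
def IsFenceComponent {P : Type} [PartialOrder P] (S C : Set P) : Prop :=
  ∃ p ∈ S, C = {q | q ∈ S ∧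
    Relation.ReflTransGen (fun a b => a ∈ S ∧ b ∈ S ∧ (a ≤ b ∨ b ≤ a)) p q}

/-- An `ℝ`-action on a poset: a family of poset automorphisms `Λ_ε` (ε ≥ 0)
with `p ≤ Λ_ε p`, `Λ_0 = id` and `Λ_{ε+ζ} = Λ_ε ∘ Λ_ζ`. -/
structure RAction (P : Type) [PartialOrder P] where
  iso : ℝ≥0 → P ≃o P
  le_iso : ∀ (ε : ℝ≥0) (p : P), p ≤ iso ε p
  iso_zero : iso 0 = OrderIso.refl P
  iso_add : ∀ (ε ζ : ℝ≥0) (p : P), iso (ε + ζ) p = iso ε (iso ζ p)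

/-- The `ε`-thickening `Ex_ε(A) = Λ_{-ε}(A)^↑ ∩ Λ_ε(A)^↓`. -/
def RAction.thicken {P : Type} [PartialOrder P] (A : RAction P) (ε : ℝ≥0)
    (S : Set P) : Set P :=
  genUpset ((A.iso ε).symm '' S) ∩ genDownset ((A.iso ε) '' S)

/-- Let `I`, `J` be intervals of a poset with an `ℝ`-action such that
`I ⊆ Ex_ε(J)` and `J ⊆ Ex_ε(I)`. Then every connected component `C` of
`I ∩ Λ_{-ε}(J)` satisfies `I ∩ C^↓ ⊆ C` and `Λ_{-ε}(J) ∩ C^↑ ⊆ C`,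
i.e. it induces a nonzero morphism of interval modules `k_I → k_J(ε)`. -/
theorem component_cond_of_thicken {P : Type} [PartialOrder P] (A : RAction P)
    {I J : Set P} (hI : IsItv I) (hJ : IsItv J) (ε : ℝ≥0)
    (hIJ : I ⊆ A.thicken ε J) (hJI : J ⊆ A.thicken ε I)
    {C : Set P} (hC : IsFenceComponent (I ∩ ((A.iso ε).symm '' J)) C) :
    I ∩ genDownset C ⊆ C ∧ ((A.iso ε).symm '' J) ∩ genUpset C ⊆ C := by
  obtain ⟨p, hpS, rfl⟩ := hC
  constructor
  · rintro x ⟨hxI, c, ⟨hcS, hpc⟩, hxc⟩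
    have hxJ' : x ∈ (A.iso ε).symm '' J := by
      obtain ⟨hu, -⟩ := hIJ hxI
      obtain ⟨a, ⟨j, hj, rfl⟩, hax⟩ := hu
      have h1 : j ≤ A.iso ε x := (OrderIso.symm_apply_le _).mp hax
      obtain ⟨jc, hjc, hjce⟩ := hcS.2
      have h2 : A.iso ε x ≤ jc := by
        rw [← hjce] at hxc
        exact (OrderIso.le_symm_apply _).mp hxc
      exact ⟨A.iso ε x, hJ.1 hj hjc h1 h2, (A.iso ε).symm_apply_apply x⟩
    have hxS : x ∈ I ∩ ((A.iso ε).symm '' J) := ⟨hxI, hxJ'⟩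
    exact ⟨hxS, hpc.tail ⟨hcS, hxS, Or.inr hxc⟩⟩
  · rintro y ⟨hyJ', c, ⟨hcS, hpc⟩, hcy⟩
    have hyI : y ∈ I := by
      obtain ⟨j, hj, rfl⟩ := hyJ'
      obtain ⟨-, hd⟩ := hJI hj
      obtain ⟨b, ⟨i', hi', rfl⟩, hjb⟩ := hd
      have h2 : (A.iso ε).symm j ≤ i' := (OrderIso.symm_apply_le _).mpr hjb
      exact hI.1 hcS.1 hi' hcy h2
    have hyS : y ∈ I ∩ ((A.iso ε).symm '' J) := ⟨hyI, hyJ'⟩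
    exact ⟨hyS, hpc.tail ⟨hcS, hyS, Or.inl hcy⟩⟩
end

section
/- Let P be a poset with an ℝ-action Λ, and let I, J be intervals of P with I ⊆ Ex_ε(J) and J ⊆ Ex_ε(I) for some ε ≥ 0. Then I ∩ Λ_{-ε}(J) ∩ Λ_{-2ε}(I) = I ∩ Λ_{-2ε}(I) and J ∩ Λ_{-ε}(I) ∩ Λ_{-2ε}(J) = J ∩ Λ_{-2ε}(J). -/
open CategoryTheory NNReal

lemma RAction.key {P : Type} [PartialOrder P] (A : RAction P) {I J : Set P}
    (hJc : IsOrdConvex J) (ε : ℝ≥0) (hIJ : I ⊆ A.thicken ε J) {x : P}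
    (hx : x ∈ I) (hx2 : A.iso (2 * ε) x ∈ I) : A.iso ε x ∈ J := by
  obtain ⟨a, ⟨a', ha'J, rfl⟩, ha⟩ := (hIJ hx).1
  obtain ⟨b, ⟨b', hb'J, rfl⟩, hb⟩ := (hIJ hx2).2
  refine hJc ha'J hb'J ?_ ?_
  · have := (A.iso ε).monotone ha
    simpa using this
  · have h2 : A.iso (2 * ε) x = A.iso ε (A.iso ε x) := by
      rw [two_mul, A.iso_add]
    rw [h2] at hb
    exact (A.iso ε).le_iff_le.mp hb

/-- Let `I`, `J` be intervals of a poset with an `ℝ`-action such that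
`I ⊆ Ex_ε(J)` and `J ⊆ Ex_ε(I)`. Then
`I ∩ Λ_{-ε}(J) ∩ Λ_{-2ε}(I) = I ∩ Λ_{-2ε}(I)` and
`J ∩ Λ_{-ε}(I) ∩ Λ_{-2ε}(J) = J ∩ Λ_{-2ε}(J)`. -/
theorem inter_shift_eq_of_thicken {P : Type} [PartialOrder P] (A : RAction P)
    {I J : Set P} (hI : IsItv I) (hJ : IsItv J) (ε : ℝ≥0)
    (hIJ : I ⊆ A.thicken ε J) (hJI : J ⊆ A.thicken ε I) :
    I ∩ ((A.iso ε).symm '' J) ∩ ((A.iso (2 * ε)).symm '' I) =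
        I ∩ ((A.iso (2 * ε)).symm '' I) ∧
      J ∩ ((A.iso ε).symm '' I) ∩ ((A.iso (2 * ε)).symm '' J) =
        J ∩ ((A.iso (2 * ε)).symm '' J) := by
  have mem2 : ∀ (K : Set P) (x : P), x ∈ (A.iso (2 * ε)).symm '' K ↔
      A.iso (2 * ε) x ∈ K := by
    intro K x
    constructor
    · rintro ⟨y, hy, rfl⟩; simpa using hy
    · intro h; exact ⟨A.iso (2 * ε) x, h, by simp⟩
  constructor
  · apply Set.eq_of_subset_of_subset (by intro x hx; exact ⟨hx.1.1, hx.2⟩)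
    rintro x ⟨hxI, hx2⟩
    rw [mem2] at hx2
    exact ⟨⟨hxI, A.iso ε x, A.key hJ.1 ε hIJ hxI hx2, by simp⟩, (mem2 _ _).mpr hx2⟩
  · apply Set.eq_of_subset_of_subset (by intro x hx; exact ⟨hx.1.1, hx.2⟩)
    rintro x ⟨hxJ, hx2⟩
    rw [mem2] at hx2
    exact ⟨⟨hxJ, A.iso ε x, A.key hI.1 ε hJI hxJ hx2, by simp⟩, (mem2 _ _).mpr hx2⟩
end

section
/- Let P be a poset with an ℝ-action Λ and let I, J be intervals of P such that I ⊆ Ex_ε(J) and J ⊆ Ex_ε(I) for some ε ≥ 0. Then the interval modules k_I and k_J are Λ_ε-interleaved: there exist morphisms α : k_I → k_J(ε) and β : k_J → k_I(ε) with β(ε) ∘ α = (k_I)_{0→2ε} and α(ε) ∘ β = (k_J)_{0→2ε}. -/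
open CategoryTheory NNReal

attribute [local instance] Classical.propDecidable

/-- The interval module `k_I` attached to a convex subset `I` of a poset `P`:
it is `k` (here presented as `PLift (p ∈ I) → k`) at points of `I` with
identity structure maps inside `I`, and `0` elsewhere. -/
noncomputable def itvMod (k : Type) [Field k] {P : Type} [PartialOrder P]
    (I : Set P) (hI : IsOrdConvex I) : P ⥤ ModuleCat k where
  obj p := ModuleCat.of k (PLift (p ∈ I) → k)
  map {p q} _ := ModuleCat.ofHom
    { toFun := fun v _ => if hp : p ∈ I then v ⟨hp⟩ else 0
      map_add' := by
        intro v w; funext hq; by_cases hp : p ∈ I <;> simp [hp]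
      map_smul' := by
        intro c v; funext hq; by_cases hp : p ∈ I <;> simp [hp]
        }
  map_id p := by
    apply ModuleCat.hom_ext; apply LinearMap.ext; intro v; funext hq
    rcases hq with ⟨hq⟩
    simp [hq] <;> rfl
  map_comp {p q r} f g := by
    apply ModuleCat.hom_ext; apply LinearMap.ext; intro v; funext hr
    rcases hr with ⟨hr⟩
    by_cases hp : p ∈ I
    · have hq : q ∈ I := hI hp hr (leOfHom f) (leOfHom g)
      simp [hp, hq] <;> rfl
    · by_cases hq : q ∈ I <;> simp [hp, hq] <;> rfl

/-- A `Λ_ε`-interleaving between persistence modules `V` and `W` over `P`,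
expressed componentwise: natural transformations `α : V → W(ε)` and
`β : W → V(ε)` with `β(ε) ∘ α = V_{0→2ε}` and `α(ε) ∘ β = W_{0→2ε}`. -/
def RAction.Interleaved {P : Type} [PartialOrder P] (k : Type) [Field k]
    (A : RAction P) (ε : ℝ≥0) (V W : P ⥤ ModuleCat k) : Prop :=
  ∃ (α : ∀ p : P, V.obj p ⟶ W.obj (A.iso ε p))
    (β : ∀ p : P, W.obj p ⟶ V.obj (A.iso ε p)),
    (∀ (p q : P) (h : p ≤ q),
      V.map (homOfLE h) ≫ α q = α p ≫ W.map (homOfLE ((A.iso ε).monotone h))) ∧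
    (∀ (p q : P) (h : p ≤ q),
      W.map (homOfLE h) ≫ β q = β p ≫ V.map (homOfLE ((A.iso ε).monotone h))) ∧
    (∀ p : P, α p ≫ β (A.iso ε p) =
      V.map (homOfLE ((A.le_iso ε p).trans (A.le_iso ε (A.iso ε p))))) ∧
    (∀ p : P, β p ≫ α (A.iso ε p) =
      W.map (homOfLE ((A.le_iso ε p).trans (A.le_iso ε (A.iso ε p)))))

/-- `V` is `Λ_ε`-trivial if the canonical morphism `V → V(ε)` vanishes. -/
def RAction.IsTrivial {P : Type} [PartialOrder P] (k : Type) [Field k]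
    (A : RAction P) (ε : ℝ≥0) (V : P ⥤ ModuleCat k) : Prop :=
  ∀ p : P, V.map (homOfLE (A.le_iso ε p)) = 0

/-- If `I ⊆ Ex_ε(J)` and `J ⊆ Ex_ε(I)` for intervals `I`, `J` of a poset with
an `ℝ`-action, then the interval modules `k_I` and `k_J` are `Λ_ε`-interleaved.

Auxiliary conditional map between one-dimensional pieces. -/
noncomputable def condMap (k : Type) [Field k] (A B : Prop) :
    (PLift A → k) →ₗ[k] (PLift B → k) where
  toFun v _ := if h : A then v ⟨h⟩ else 0
  map_add' v w := by
    funext hb; by_cases h : A <;> simp [h]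
  map_smul' c v := by
    funext hb; by_cases h : A <;> simp [h]

lemma condMap_comp (k : Type) [Field k] {A B C : Prop} (h : A → C → B) :
    (condMap k B C).comp (condMap k A B) = condMap k A C := by
  apply LinearMap.ext; intro v; funext hc
  rcases hc with ⟨hc⟩
  by_cases ha : A
  · have hb : B := h ha hc
    simp [condMap, ha, hb]
  · simp [condMap, ha]

/-- If `I ⊆ Ex_ε(J)` and `J ⊆ Ex_ε(I)` for intervals `I`, `J` of a poset with
an `ℝ`-action, then the interval modules `k_I` and `k_J` are `Λ_ε`-interleaved. -/
theorem interleaved_of_thicken (k : Type) [Field k] {P : Type} [PartialOrder P]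
    (A : RAction P) {I J : Set P} (hI : IsItv I) (hJ : IsItv J) (ε : ℝ≥0)
    (hIJ : I ⊆ A.thicken ε J) (hJI : J ⊆ A.thicken ε I) :
    A.Interleaved k ε (itvMod k I hI.1) (itvMod k J hJ.1) := by
  set L := A.iso ε with hL
  have hIJ_up : ∀ p ∈ I, ∃ j ∈ J, j ≤ L p := by
    intro p hp
    obtain ⟨⟨a, ⟨j, hj, rfl⟩, hle⟩, -⟩ := hIJ hp
    exact ⟨j, hj, L.symm_apply_le.mp hle⟩
  have hIJ_down : ∀ p ∈ I, ∃ j ∈ J, p ≤ L j := by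
    intro p hp
    obtain ⟨-, ⟨a, ⟨j, hj, rfl⟩, hle⟩⟩ := hIJ hp
    exact ⟨j, hj, hle⟩
  have hJI_up : ∀ p ∈ J, ∃ i ∈ I, i ≤ L p := by
    intro p hp
    obtain ⟨⟨a, ⟨i, hi, rfl⟩, hle⟩, -⟩ := hJI hp
    exact ⟨i, hi, L.symm_apply_le.mp hle⟩
  have hJI_down : ∀ p ∈ J, ∃ i ∈ I, p ≤ L i := by
    intro p hp
    obtain ⟨-, ⟨a, ⟨i, hi, rfl⟩, hle⟩⟩ := hJI hp
    exact ⟨i, hi, hle⟩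
  -- key implications
  have KaI : ∀ {p q : P}, p ≤ q → p ∈ I → L q ∈ J → q ∈ I := by
    intro p q hpq hp hq
    obtain ⟨i, hi, hle⟩ := hJI_down (L q) hq
    exact hI.1 hp hi hpq (L.le_iff_le.mp hle)
  have KaJ : ∀ {p q : P}, p ≤ q → p ∈ I → q ∈ I → L q ∈ J → L p ∈ J := by
    intro p q hpq hp hq hq'
    obtain ⟨j, hj, hle⟩ := hIJ_up p hp
    exact hJ.1 hj hq' hle (L.le_iff_le.mpr hpq)
  have KbJ : ∀ {p q : P}, p ≤ q → p ∈ J → L q ∈ I → q ∈ J := by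
    intro p q hpq hp hq
    obtain ⟨j, hj, hle⟩ := hIJ_down (L q) hq
    exact hJ.1 hp hj hpq (L.le_iff_le.mp hle)
  have KbI : ∀ {p q : P}, p ≤ q → p ∈ J → q ∈ J → L q ∈ I → L p ∈ I := by
    intro p q hpq hp hq hq'
    obtain ⟨i, hi, hle⟩ := hJI_up p hp
    exact hI.1 hi hq' hle (L.le_iff_le.mpr hpq)
  have K3a : ∀ {p : P}, p ∈ I → L (L p) ∈ I → L p ∈ J := by
    intro p hp h2
    obtain ⟨j, hj, hle⟩ := hIJ_up p hp
    obtain ⟨j', hj', hle'⟩ := hIJ_down (L (L p)) h2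
    exact hJ.1 hj hj' hle (L.le_iff_le.mp hle')
  have K3b : ∀ {p : P}, p ∈ J → L (L p) ∈ J → L p ∈ I := by
    intro p hp h2
    obtain ⟨i, hi, hle⟩ := hJI_up p hp
    obtain ⟨i', hi', hle'⟩ := hJI_down (L (L p)) h2
    exact hI.1 hi hi' hle (L.le_iff_le.mp hle')
  refine ⟨fun p => ModuleCat.ofHom (condMap k (p ∈ I) (L p ∈ J)),
          fun p => ModuleCat.ofHom (condMap k (p ∈ J) (L p ∈ I)), ?_, ?_, ?_, ?_⟩
  · intro p q h
    change ModuleCat.ofHom (condMap k (p ∈ I) (q ∈ I)) ≫ ModuleCat.ofHom (condMap k (q ∈ I) (L q ∈ J))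
        = ModuleCat.ofHom (condMap k (p ∈ I) (L p ∈ J)) ≫ ModuleCat.ofHom (condMap k (L p ∈ J) (L q ∈ J))
    rw [← ModuleCat.ofHom_comp, ← ModuleCat.ofHom_comp,
        condMap_comp k (fun hp hq => KaI h hp hq),
        condMap_comp k (fun hp hq => KaJ h hp (KaI h hp hq) hq)]
  · intro p q h
    change ModuleCat.ofHom (condMap k (p ∈ J) (q ∈ J)) ≫ ModuleCat.ofHom (condMap k (q ∈ J) (L q ∈ I))
        = ModuleCat.ofHom (condMap k (p ∈ J) (L p ∈ I)) ≫ ModuleCat.ofHom (condMap k (L p ∈ I) (L q ∈ I))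
    rw [← ModuleCat.ofHom_comp, ← ModuleCat.ofHom_comp,
        condMap_comp k (fun hp hq => KbJ h hp hq),
        condMap_comp k (fun hp hq => KbI h hp (KbJ h hp hq) hq)]
  · intro p
    change ModuleCat.ofHom (condMap k (p ∈ I) (L p ∈ J)) ≫ ModuleCat.ofHom (condMap k (L p ∈ J) (L (L p) ∈ I))
        = ModuleCat.ofHom (condMap k (p ∈ I) (L (L p) ∈ I))
    rw [← ModuleCat.ofHom_comp]
    exact congrArg ModuleCat.ofHom <| condMap_comp k (fun hp h2 => K3a hp h2)
  · intro p
    change ModuleCat.ofHom (condMap k (p ∈ J) (L p ∈ I)) ≫ ModuleCat.ofHom (condMap k (L p ∈ I) (L (L p) ∈ J))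
        = ModuleCat.ofHom (condMap k (p ∈ J) (L (L p) ∈ J))
    rw [← ModuleCat.ofHom_comp]
    exact congrArg ModuleCat.ofHom <| condMap_comp k (fun hp h2 => K3b hp h2)
end

section
/- Let P be a poset with an ℝ_{≥0}-action Λ, let V and W be pointwise finite-dimensional persistence modules over P, and fix ε ≥ 0. If M is an indecomposable direct summand of V that is Λ_{2ε}-significant (i.e., M_{0→2ε} ≠ 0), then the set of indecomposable direct summands N of W such that M and N are Λ_ε-interleaved is finite. -/
open CategoryTheory CategoryTheory.Limits NNReal

/-- An `ℝ≥0`-action on a poset: a family of translations `Λ_ε` (order-preserving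
maps with `p ≤ Λ_ε p`) with `Λ_0 = id` and `Λ_{ε+ζ} = Λ_ε ∘ Λ_ζ`. -/
structure TransAction (P : Type) [PartialOrder P] where
  t : ℝ≥0 → P →o P
  le_t : ∀ (ε : ℝ≥0) (p : P), p ≤ t ε p
  t_zero : t 0 = OrderHom.id
  t_add : ∀ (ε ζ : ℝ≥0) (p : P), t (ε + ζ) p = t ε (t ζ p)

/-- A `Λ_ε`-interleaving between persistence modules over `P`, expressed
componentwise. -/
def TransAction.Interleaved {P : Type} [PartialOrder P] (k : Type) [Field k]
    (A : TransAction P) (ε : ℝ≥0) (V W : P ⥤ ModuleCat k) : Prop :=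
  ∃ (α : ∀ p : P, V.obj p ⟶ W.obj (A.t ε p))
    (β : ∀ p : P, W.obj p ⟶ V.obj (A.t ε p)),
    (∀ (p q : P) (h : p ≤ q),
      V.map (homOfLE h) ≫ α q = α p ≫ W.map (homOfLE ((A.t ε).monotone h))) ∧
    (∀ (p q : P) (h : p ≤ q),
      W.map (homOfLE h) ≫ β q = β p ≫ V.map (homOfLE ((A.t ε).monotone h))) ∧
    (∀ p : P, α p ≫ β (A.t ε p) =
      V.map (homOfLE ((A.le_t ε p).trans (A.le_t ε (A.t ε p))))) ∧
    (∀ p : P, β p ≫ α (A.t ε p) =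
      W.map (homOfLE ((A.le_t ε p).trans (A.le_t ε (A.t ε p)))))

/-- `V` is `Λ_ε`-trivial if the canonical morphism `V → V(ε)` vanishes;
otherwise it is `Λ_ε`-significant. -/
def TransAction.IsTrivial {P : Type} [PartialOrder P] (k : Type) [Field k]
    (A : TransAction P) (ε : ℝ≥0) (V : P ⥤ ModuleCat k) : Prop :=
  ∀ p : P, V.map (homOfLE (A.le_t ε p)) = 0

/-- Pointwise finite-dimensionality of a persistence module. -/
def IsPfd {P : Type} [PartialOrder P] (k : Type) [Field k]
    (V : P ⥤ ModuleCat k) : Prop :=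
  ∀ p : P, Module.Finite k (V.obj p)

/-- `M` is a direct summand of `V`. -/
def IsDirectSummand {P : Type} [PartialOrder P] {k : Type} [Field k]
    (M V : P ⥤ ModuleCat k) : Prop :=
  ∃ (i : M ⟶ V) (r : V ⟶ M), i ≫ r = 𝟙 M

/-- `M` is indecomposable: it is nonzero and admits no nontrivial idempotent
endomorphism. -/
def Indec {P : Type} [PartialOrder P] {k : Type} [Field k]
    (M : P ⥤ ModuleCat k) : Prop :=
  ¬ IsZero M ∧ ∀ e : M ⟶ M, e ≫ e = e → e = 0 ∨ e = 𝟙 M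

/-- For pfd persistence modules `V`, `W` over a poset with an `ℝ≥0`-action and
a `Λ_{2ε}`-significant indecomposable direct summand `M` of `V`, only finitely
many indecomposable summands of `W` (in a given decomposition of `W`) are
`Λ_ε`-interleaved with `M`. -/
theorem finite_interleaved_summands {P : Type} [PartialOrder P] (k : Type) [Field k]
    (A : TransAction P) (V W : P ⥤ ModuleCat k)
    (hV : IsPfd k V) (hW : IsPfd k W) (ε : ℝ≥0)
    (M : P ⥤ ModuleCat k) (hMV : IsDirectSummand M V) (hM : Indec M)
    (hMsig : ¬ A.IsTrivial k (2 * ε) M)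
    {κ : Type} (N : κ → P ⥤ ModuleCat k) (hN : ∀ j, Indec (N j))
    (eW : W ≅ ∐ N) :
    {j : κ | A.Interleaved k ε M (N j)}.Finite := by
  classical
  -- a point where `M_{0→2ε}` is nonzero
  simp only [TransAction.IsTrivial, not_forall] at hMsig
  obtain ⟨p₀, hp₀⟩ := hMsig
  set q : P := A.t ε p₀ with hq
  -- the map `M.obj p₀ ⟶ M.obj (t ε (t ε p₀))` is nonzero
  have heq : A.t (2 * ε) p₀ = A.t ε (A.t ε p₀) := by
    rw [two_mul, A.t_add]
  have hle2 : p₀ ≤ A.t ε (A.t ε p₀) := (A.le_t ε p₀).trans (A.le_t ε (A.t ε p₀))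
  have hmap2 : M.map (homOfLE hle2) ≠ 0 := by
    intro h0
    apply hp₀
    have : (homOfLE (A.le_t (2 * ε) p₀)) =
        homOfLE hle2 ≫ eqToHom heq.symm := Subsingleton.elim _ _
    rw [this, M.map_comp, h0, zero_comp]
  -- injections and projections for the summands of `W`
  set inc : ∀ j, N j ⟶ W := fun j => Sigma.ι N j ≫ eW.inv with hinc
  set prj : ∀ j, W ⟶ N j := fun j =>
    eW.hom ≫ Sigma.desc (fun i => if h : i = j then eqToHom (by rw [h]) else 0) with hprj
  have hip : ∀ j, inc j ≫ prj j = 𝟙 (N j) := by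
    intro j
    simp [hinc, hprj]
  have hip' : ∀ i j, i ≠ j → inc i ≫ prj j = 0 := by
    intro i j hij
    simp [hinc, hprj, hij]
  -- interleaved summands are nontrivial at `q`
  have hsub : {j : κ | A.Interleaved k ε M (N j)} ⊆
      {j : κ | ¬ Subsingleton ((N j).obj q)} := by
    intro j hj
    obtain ⟨α, β, -, -, hβα, -⟩ := hj
    intro hsing
    apply hmap2
    rw [← hβα p₀]
    ext x
    have : (α p₀) x = 0 := Subsingleton.elim _ _
    simp [this, LinearMap.zero_apply]
  refine Set.Finite.subset ?_ hsub
  -- choose a nonzero vector in each nontrivial summand at `q`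
  have hx : ∀ j : {j : κ | ¬ Subsingleton ((N j).obj q)},
      ∃ x : (N (j : κ)).obj q, x ≠ 0 := by
    rintro ⟨j, hj⟩
    have : Nontrivial ((N j).obj q) := not_subsingleton_iff_nontrivial.mp hj
    exact exists_ne 0
  choose x hxne using hx
  -- the images in `W.obj q` are linearly independent
  haveI : Module.Finite k (W.obj q) := hW q
  have hli : LinearIndependent k
      (fun j : {j : κ | ¬ Subsingleton ((N j).obj q)} => (inc (j : κ)).app q (x j)) := by
    rw [linearIndependent_iff']
    intro s g hsum j hjs
    have := congrArg ((prj (j : κ)).app q) hsum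
    rw [map_sum, map_zero] at this
    rw [Finset.sum_eq_single j] at this
    · rw [map_smul] at this
      have hc : ((prj (j : κ)).app q) (((inc (j : κ)).app q) (x j)) = x j := by
        have h1 := congrArg (fun f => NatTrans.app f q) (hip (j : κ))
        simp only [NatTrans.comp_app, NatTrans.id_app] at h1
        exact congrArg (fun f => f (x j)) h1
      rw [hc] at this
      rcases smul_eq_zero.mp this with h | h
      · exact h
      · exact absurd h (hxne j)
    · intro i his hij
      have h0 : ((prj (j : κ)).app q) (((inc (i : κ)).app q) (x i)) = 0 := by
        have hne : (i : κ) ≠ (j : κ) := fun h => hij (Subtype.ext h)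
        have h1 := congrArg (fun f => NatTrans.app f q) (hip' (i : κ) (j : κ) hne)
        simp only [NatTrans.comp_app, Limits.zero_app] at h1
        exact congrArg (fun f => f (x i)) h1
      rw [map_smul, h0, smul_zero]
    · intro h; exact absurd hjs h
  have : Finite {j : κ | ¬ Subsingleton ((N j).obj q)} := hli.finite
  exact Set.toFinite _
end
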